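/- Let n ≥ 1 and consider the matrix game U ∈ ℝ^{n×n}. For every ε with 0 ≤ ε < 1, the pure strategy pair (e₁, e₁) is an ε-Nash equilibrium of U, and it is the unique pure ε-Nash equilibrium: if i, j ∈ [n] are such that (e_i, e_j) is an ε-Nash equilibrium of U, then i = 1 and j = 1. -/

import Mathlib

open Finset

/-- The matrix `U`: zeros on the diagonal, `-2` just above it, `2` just below it,
`-1` further above, `1` further below. -/
def Umat (n : ℕ) : Matrix (Fin n) (Fin n) ℝ := fun i j =>
  if (i : ℕ) = j then 0
  else if (j : ℕ) = i + 1 then -2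
  else if (i : ℕ) = j + 1 then 2
  else if (i : ℕ) < j then -1
  else 1

/-- `(p, q)` is an `ε`-Nash equilibrium of the matrix game `M`
(row player minimizes, column player maximizes):
`M(p,q) - BRVal_r(q) ≤ ε` and `BRVal_c(p) - M(p,q) ≤ ε`. -/
def IsEpsNE {n : ℕ} (M : Matrix (Fin n) (Fin n) ℝ) (ε : ℝ) (p q : Fin n → ℝ) : Prop :=
  (∑ i, ∑ j, p i * M i j * q j) - (⨅ i, ∑ j, M i j * q j) ≤ ε ∧
  (⨆ j, ∑ i, p i * M i j) - (∑ i, ∑ j, p i * M i j * q j) ≤ ε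

lemma Umat_sum2 (n : ℕ) (a b : Fin n) :
    (∑ i, ∑ j, (Pi.single a 1 : Fin n → ℝ) i * Umat n i j * (Pi.single b 1 : Fin n → ℝ) j)
      = Umat n a b := by
  simp [Pi.single_apply, mul_ite, ite_mul, Finset.sum_ite_eq', Finset.sum_ite_eq]

lemma Umat_lt {n : ℕ} {i j : Fin n} (h : Umat n i j < -1) : (j : ℕ) = (i : ℕ) + 1 := by
  unfold Umat at h
  split_ifs at h <;> first | assumption | linarith

lemma Umat_gt {n : ℕ} {i j : Fin n} (h : (1:ℝ) < Umat n i j) : (i : ℕ) = (j : ℕ) + 1 := by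
  unfold Umat at h
  split_ifs at h <;> first | assumption | linarith

lemma Umat_eval_neg2 {n : ℕ} {i j : Fin n} (h : (j : ℕ) = (i : ℕ) + 1) :
    Umat n i j = -2 := by
  unfold Umat
  rw [if_neg (by omega), if_pos h]

lemma Umat_eval_2 {n : ℕ} {i j : Fin n} (h : (i : ℕ) = (j : ℕ) + 1) :
    Umat n i j = 2 := by
  unfold Umat
  rw [if_neg (by omega), if_neg (by omega), if_pos h]

lemma Umat_diag {n : ℕ} (i : Fin n) : Umat n i i = 0 := by simp [Umat]

/-- For every `0 ≤ ε < 1`, the pure pair `(e₁, e₁)` is an `ε`-Nash equilibrium of the game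
`U` (of size `n+1 ≥ 1`, so `e₁` is the first basis vector), and it is the unique pure
`ε`-Nash equilibrium. -/
theorem Umat_unique_pure_epsNE (n : ℕ) (ε : ℝ) (hε0 : 0 ≤ ε) (hε1 : ε < 1) :
    IsEpsNE (Umat (n + 1)) ε (Pi.single (0 : Fin (n + 1)) 1) (Pi.single (0 : Fin (n + 1)) 1) ∧
    ∀ i j : Fin (n + 1),
      IsEpsNE (Umat (n + 1)) ε (Pi.single i 1) (Pi.single j 1) →
      i = 0 ∧ j = 0 := by
  have hcol : ∀ b : Fin (n+1), ∀ k : Fin (n+1),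
      (∑ j, Umat (n+1) k j * (Pi.single b 1 : Fin (n+1) → ℝ) j) = Umat (n+1) k b := by
    intro b k
    simp [Pi.single_apply, mul_ite, Finset.sum_ite_eq']
  have hrow : ∀ a : Fin (n+1), ∀ k : Fin (n+1),
      (∑ i, (Pi.single a 1 : Fin (n+1) → ℝ) i * Umat (n+1) i k) = Umat (n+1) a k := by
    intro a k
    simp [Pi.single_apply, ite_mul, Finset.sum_ite_eq]
  have h00 : Umat (n+1) 0 0 = 0 := Umat_diag 0
  constructor
  · constructor
    · rw [Umat_sum2, h00]
      simp only [hcol]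
      have : (0:ℝ) ≤ ⨅ k, Umat (n+1) k 0 := by
        apply le_ciInf
        intro k
        unfold Umat
        simp only [Fin.val_zero]
        split_ifs <;> first | exact (‹False›).elim | (exfalso; omega) | (norm_num <;> split_ifs <;> simp_all [Fin.lt_def] <;> omega)
      linarith
    · rw [Umat_sum2, h00]
      simp only [hrow]
      have : (⨆ k, Umat (n+1) 0 k) ≤ 0 := by
        apply ciSup_le
        intro k
        unfold Umat
        simp only [Fin.val_zero]
        split_ifs <;> first | exact (‹False›).elim | (exfalso; omega) | (norm_num <;> split_ifs <;> first | (exfalso; rename_i b a; exact a (Fin.lt_def.mpr (by simpa using b))) | norm_num)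
      linarith
  · intro i j ⟨h1, h2⟩
    rw [Umat_sum2] at h1 h2
    simp only [hcol] at h1
    simp only [hrow] at h2
    have hinf : ∀ k : Fin (n+1), (⨅ k, Umat (n+1) k j) ≤ Umat (n+1) k j := fun k =>
      ciInf_le (Finite.bddBelow_range _) k
    have hsup : ∀ k : Fin (n+1), Umat (n+1) i k ≤ ⨆ k, Umat (n+1) i k := fun k =>
      le_ciSup (Finite.bddAbove_range _) k
    have hj : (j : ℕ) = 0 := by
      by_contra hj
      have hlt : (j:ℕ) - 1 < n + 1 := by omega
      have hk := hinf ⟨(j:ℕ) - 1, hlt⟩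
      rw [Umat_eval_neg2 (by simp; omega)] at hk
      have hij : Umat (n+1) i j < -1 := by linarith
      have hji := Umat_lt hij
      by_cases hi : (i : ℕ) = 0
      · have hs := hsup i
        rw [Umat_diag] at hs
        rw [Umat_eval_neg2 hji] at h2
        linarith
      · have hilt : (i:ℕ) - 1 < n + 1 := by omega
        have hk2 := hsup ⟨(i:ℕ) - 1, hilt⟩
        rw [Umat_eval_2 (by simp; omega)] at hk2
        have hgt : (1:ℝ) < Umat (n+1) i j := by linarith
        have := Umat_gt hgt
        omega
    have hj0 : j = 0 := Fin.ext hj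
    subst hj0
    have hi : (i : ℕ) = 0 := by
      by_contra hi
      have hk := hinf 0
      rw [h00] at hk
      have hilt : (i:ℕ) - 1 < n + 1 := by omega
      have hk2 := hsup ⟨(i:ℕ) - 1, hilt⟩
      rw [Umat_eval_2 (by simp; omega)] at hk2
      have hgt : (1:ℝ) < Umat (n+1) i 0 := by linarith
      have hji := Umat_gt hgt
      rw [Umat_eval_2 hji] at h1
      linarith
    exact ⟨Fin.ext hi, rfl⟩
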